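/- arXiv:1910.06886 — 3 statements merged into one kernel-verified Lean document; each statement's English description precedes it below -/
import Mathlib

section
/- Let g be a conformal (holomorphic injective) map from the open unit disk D to ℂ with image of finite area. For X₁ on the unit circle and 0 < r < 1/2, let l(r) denote the length of the image under g of the circular arc C(r) = D ∩ {z : |z - X₁| = r}. Then the integral ∫₀^{1/2} l(r)²/r dr is finite. -/
/-!
By the area formula, `∫_D |g'|² = area (g D) < ∞`. On the arc `t(r)`, of angular measure at most
`2π`, Cauchy–Schwarz gives `l(r)² ≤ 2π r² ∫_{t(r)} |g'(X₁ + r e^{it})|² dt`, i.e.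
`l(r)² / r ≤ 2π · r ∫_{t(r)} |g'|² dt`. Integrating in `r`, the right-hand side becomes `2π` times
the integral of `|g'|²` over `D` in polar coordinates centred at `X₁`, hence at most
`2π · area (g D)`.
-/

open Set MeasureTheory Complex Real
open scoped ENNReal

theorem stronglyMeasurable_setIntegral_prodMk_preimage {α β E : Type*} [MeasurableSpace α]
    [MeasurableSpace β] {ν : Measure β} [SFinite ν] [NormedAddCommGroup E] [NormedSpace ℝ E]
    {f : α × β → E} (hf : StronglyMeasurable f) {W : Set (α × β)} (hW : MeasurableSet W) :
    StronglyMeasurable fun x => ∫ y in Prod.mk x ⁻¹' W, f (x, y) ∂ν := by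
  simp_rw [← integral_indicator (measurable_prodMk_left hW)]
  exact (hf.indicator hW).integral_prod_right'

theorem ENNReal.sq_lintegral_le_measure_univ_mul {α : Type*} [MeasurableSpace α]
    (μ : Measure α) {f : α → ℝ≥0∞} (hf : AEMeasurable f μ) :
    (∫⁻ x, f x ∂μ) ^ 2 ≤ μ univ * ∫⁻ x, f x ^ 2 ∂μ := by
  have h := ENNReal.lintegral_mul_le_Lp_mul_Lq μ Real.HolderConjugate.two_two
    aemeasurable_const hf (f := fun _ => 1)
  simp only [Pi.mul_apply, one_mul, ENNReal.one_rpow, lintegral_const] at h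
  calc (∫⁻ x, f x ∂μ) ^ 2
      ≤ ((μ univ) ^ (1 / 2 : ℝ) * (∫⁻ x, f x ^ (2 : ℝ) ∂μ) ^ (1 / 2 : ℝ)) ^ 2 := by gcongr
    _ = μ univ * ∫⁻ x, f x ^ 2 ∂μ := by
      simp_rw [mul_pow, ← ENNReal.rpow_mul_natCast, ENNReal.rpow_two]
      norm_num

theorem sq_enorm_integral_le {α E : Type*} [MeasurableSpace α] [NormedAddCommGroup E]
    [NormedSpace ℝ E] (μ : Measure α) {f : α → E} (hf : AEStronglyMeasurable f μ) :
    ‖∫ x, f x ∂μ‖ₑ ^ 2 ≤ μ univ * ∫⁻ x, ‖f x‖ₑ ^ 2 ∂μ :=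
  (pow_le_pow_left' (enorm_integral_le_lintegral_enorm f) 2).trans
    (ENNReal.sq_lintegral_le_measure_univ_mul μ hf.enorm)

theorem det_restrictScalars_smulRight_one (a : ℂ) :
    ((ContinuousLinearMap.smulRight (1 : ℂ →L[ℂ] ℂ) a).restrictScalars ℝ).det = normSq a := by
  have h : (((ContinuousLinearMap.smulRight (1 : ℂ →L[ℂ] ℂ) a).restrictScalars ℝ :
      ℂ →L[ℝ] ℂ) : ℂ →ₗ[ℝ] ℂ) = Algebra.lmul ℝ ℂ a := by
    ext z
    simp [mul_comm]
  rw [ContinuousLinearMap.det, h, ← Algebra.norm_apply, Algebra.norm_complex_apply]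

theorem lintegral_enorm_deriv_sq_eq_volume_image {g : ℂ → ℂ} {s : Set ℂ} (hs : IsOpen s)
    (hg : DifferentiableOn ℂ g s) (hinj : InjOn g s) :
    ∫⁻ z in s, ‖deriv g z‖ₑ ^ 2 = volume (g '' s) := by
  have hderiv : ∀ z ∈ s, HasFDerivWithinAt g
      ((ContinuousLinearMap.smulRight (1 : ℂ →L[ℂ] ℂ) (deriv g z)).restrictScalars ℝ) s z :=
    fun z hz => ((hg.differentiableAt (hs.mem_nhds hz)).hasDerivAt.hasFDerivAt.restrictScalars
      ℝ).hasFDerivWithinAt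
  rw [← setLIntegral_one, lintegral_image_eq_lintegral_abs_det_fderiv_mul volume
    hs.measurableSet hderiv hinj]
  refine setLIntegral_congr_fun hs.measurableSet fun z _ => ?_
  rw [det_restrictScalars_smulRight_one, mul_one, abs_of_nonneg (normSq_nonneg _),
    normSq_eq_norm_sq, ENNReal.ofReal_pow (norm_nonneg _), ofReal_norm]

theorem lintegral_eq_lintegral_polar (c : ℂ) {f : ℂ → ℝ≥0∞} (hf : Measurable f) :
    ∫⁻ z, f z = ∫⁻ r in Ioi 0, ENNReal.ofReal r *
      ∫⁻ t in Icc 0 (2 * π), f (c + r * exp (t * I)) := by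
  set G : ℝ × ℝ → ℝ≥0∞ := fun p => ENNReal.ofReal p.1 * f (c + p.1 * exp (p.2 * I))
  have hG : Measurable G := by fun_prop
  have hpre : (· + ((0 : ℝ), π)) ⁻¹' (Ioi 0 ×ˢ Ioo 0 (2 * π)) = Ioi 0 ×ˢ Ioo (-π) π := by
    ext p
    simp only [mem_preimage, mem_prod, mem_Ioi, mem_Ioo, Prod.fst_add, Prod.snd_add, add_zero]
    constructor <;> rintro ⟨h1, h2, h3⟩ <;> refine ⟨h1, ?_, ?_⟩ <;> linarith
  -- Mathlib's polar angle ranges over `(-π, π)`; the shift `t ↦ t + π` moves it to `(0, 2π)`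
  -- and turns `c - r e^{it}` into `c + r e^{i(t + π)}`.
  calc ∫⁻ z, f z = ∫⁻ z, f (c - z) := (lintegral_sub_left_eq_self f c).symm
    _ = ∫⁻ p in Ioi 0 ×ˢ Ioo (-π) π, G (p + (0, π)) := by
      rw [← Complex.lintegral_comp_polarCoord_symm, polarCoord_target]
      refine setLIntegral_congr_fun (measurableSet_Ioi.prod measurableSet_Ioo) fun p _ => ?_
      simp only [G, Complex.polarCoord_symm_apply, smul_eq_mul, Prod.fst_add, Prod.snd_add,
        add_zero, Complex.exp_mul_I, ← ofReal_cos, ← ofReal_sin, Real.cos_add_pi,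
        Real.sin_add_pi, ofReal_neg]
      ring_nf
    _ = ∫⁻ p in Ioi 0 ×ˢ Icc 0 (2 * π), G p := by
      rw [← hpre, (measurePreserving_add_right volume _).setLIntegral_comp_preimage_emb
        (measurableEmbedding_addRight _)]
      exact setLIntegral_congr (Measure.set_prod_ae_eq (ae_eq_refl _) Ioo_ae_eq_Icc)
    _ = _ := by
      rw [Measure.volume_eq_prod, setLIntegral_prod _ hG.aemeasurable]
      refine setLIntegral_congr_fun measurableSet_Ioi fun r _ => ?_
      simp only [G]
      exact lintegral_const_mul _ (hf.comp (by fun_prop))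

theorem sq_enorm_setIntegral_arc_le (c : ℂ) {s : Set ℂ} (hs : MeasurableSet s) {φ : ℂ → ℝ}
    (hφ : Measurable φ) (r : ℝ) :
    ‖∫ t in {t : ℝ | t ∈ Icc 0 (2 * π) ∧ c + r * exp (t * I) ∈ s},
        φ (c + r * exp (t * I)) * r‖ₑ ^ 2 ≤
      ENNReal.ofReal (2 * π) * ‖r‖ₑ ^ 2 *
        ∫⁻ t in Icc 0 (2 * π), s.indicator (fun z => ‖φ z‖ₑ ^ 2) (c + r * exp (t * I)) := by
  set γ : ℝ → ℂ := fun t => c + r * exp (t * I)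
  have hγ : Measurable γ := by fun_prop
  set A := γ ⁻¹' s ∩ Icc 0 (2 * π)
  have harc : {t : ℝ | t ∈ Icc 0 (2 * π) ∧ γ t ∈ s} = A := inter_comm _ _
  calc _ ≤ volume A * ∫⁻ t in A, ‖φ (γ t) * r‖ₑ ^ 2 := by
        rw [harc, ← Measure.restrict_apply_univ]
        exact sq_enorm_integral_le _ (hφ.comp hγ |>.mul_const r).aestronglyMeasurable
    _ ≤ ENNReal.ofReal (2 * π) * ∫⁻ t in A, ‖φ (γ t) * r‖ₑ ^ 2 := by
        gcongr
        exact (measure_mono inter_subset_right).trans_eq (by rw [Real.volume_Icc, sub_zero])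
    _ = _ := by
        rw [mul_assoc, ← setLIntegral_indicator (hs.preimage hγ),
          ← lintegral_const_mul' (‖r‖ₑ ^ 2) _ (by simp)]
        congr 1
        refine lintegral_congr fun t => ?_
        by_cases ht : γ t ∈ s
        · rw [indicator_of_mem ht, indicator_of_mem (s := γ ⁻¹' s) ht, enorm_mul, mul_pow,
            mul_comm]
        · rw [indicator_of_notMem ht, indicator_of_notMem (s := γ ⁻¹' s) ht, mul_zero]

theorem enorm_sq_div_setIntegral_arc_le (c : ℂ) {s : Set ℂ} (hs : MeasurableSet s) {φ : ℂ → ℝ}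
    (hφ : Measurable φ) {r : ℝ} (hr : 0 < r) :
    ‖(∫ t in {t : ℝ | t ∈ Icc 0 (2 * π) ∧ c + r * exp (t * I) ∈ s},
        φ (c + r * exp (t * I)) * r) ^ 2 / r‖ₑ ≤
      ENNReal.ofReal (2 * π) * (ENNReal.ofReal r *
        ∫⁻ t in Icc 0 (2 * π), s.indicator (fun z => ‖φ z‖ₑ ^ 2) (c + r * exp (t * I))) := by
  set L := ∫ t in {t : ℝ | t ∈ Icc 0 (2 * π) ∧ c + r * exp (t * I) ∈ s},
    φ (c + r * exp (t * I)) * r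
  set J := ∫⁻ t in Icc 0 (2 * π), s.indicator (fun z => ‖φ z‖ₑ ^ 2) (c + r * exp (t * I))
  rw [div_eq_mul_inv, enorm_mul, enorm_pow, enorm_inv hr.ne', ← Real.enorm_eq_ofReal hr.le]
  calc ‖L‖ₑ ^ 2 * ‖r‖ₑ⁻¹ ≤ ENNReal.ofReal (2 * π) * ‖r‖ₑ ^ 2 * J * ‖r‖ₑ⁻¹ := by
        gcongr
        exact sq_enorm_setIntegral_arc_le c hs hφ r
    _ = ENNReal.ofReal (2 * π) * (‖r‖ₑ * J) * (‖r‖ₑ * ‖r‖ₑ⁻¹) := by ring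
    _ = ENNReal.ofReal (2 * π) * (‖r‖ₑ * J) := by
        rw [ENNReal.mul_inv_cancel (enorm_ne_zero.2 hr.ne') enorm_ne_top, mul_one]

theorem stmt_5_general (g : ℂ → ℂ)
    (hg : DifferentiableOn ℂ g (Metric.ball (0 : ℂ) 1))
    (hinj : Set.InjOn g (Metric.ball (0 : ℂ) 1))
    (harea : volume (g '' Metric.ball (0 : ℂ) 1) < ⊤)
    (X₁ : ℂ)
    (l : ℝ → ℝ)
    (hl : ∀ r, l r = ∫ t in {t : ℝ | t ∈ Set.Icc 0 (2 * π) ∧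
        X₁ + r * Complex.exp (t * Complex.I) ∈ Metric.ball (0 : ℂ) 1},
        ‖deriv g (X₁ + r * Complex.exp (t * Complex.I))‖ * r) :
    MeasureTheory.IntegrableOn (fun r => (l r) ^ 2 / r) (Set.Ioo 0 (1 / 2)) volume := by
  set D := Metric.ball (0 : ℂ) 1
  set E : ℂ → ℝ≥0∞ := D.indicator fun z => ‖deriv g z‖ₑ ^ 2
  have hE : Measurable E := (measurable_deriv g).enorm.pow_const 2 |>.indicator measurableSet_ball
  have hl_meas : StronglyMeasurable l := by
    rw [funext hl]
    refine stronglyMeasurable_setIntegral_prodMk_preimage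
      (W := {p : ℝ × ℝ | p.2 ∈ Icc 0 (2 * π) ∧ X₁ + p.1 * exp (p.2 * I) ∈ D})
      (f := fun p : ℝ × ℝ => ‖deriv g (X₁ + p.1 * exp (p.2 * I))‖ * p.1) ?_ ?_
    · exact Measurable.stronglyMeasurable (by fun_prop)
    · exact (measurableSet_Icc.preimage measurable_snd).inter
        (measurableSet_ball.preimage (by fun_prop))
  have hl_sq (r : ℝ) (hr : r ∈ Ioo (0 : ℝ) (1 / 2)) : ‖l r ^ 2 / r‖ₑ ≤
      ENNReal.ofReal (2 * π) *
        (ENNReal.ofReal r * ∫⁻ t in Icc 0 (2 * π), E (X₁ + r * exp (t * I))) := by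
    simpa only [enorm_norm, ← hl] using enorm_sq_div_setIntegral_arc_le X₁ (s := D)
      measurableSet_ball (measurable_deriv g).norm hr.1
  refine ⟨(hl_meas.measurable.pow_const 2 |>.div measurable_id).aestronglyMeasurable, ?_⟩
  calc ∫⁻ r in Ioo 0 (1 / 2), ‖l r ^ 2 / r‖ₑ
      ≤ ∫⁻ r in Ioo 0 (1 / 2), ENNReal.ofReal (2 * π) *
          (ENNReal.ofReal r * ∫⁻ t in Icc 0 (2 * π), E (X₁ + r * exp (t * I))) :=
        setLIntegral_mono' measurableSet_Ioo hl_sq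
    _ ≤ ENNReal.ofReal (2 * π) * ∫⁻ r in Ioi 0,
          ENNReal.ofReal r * ∫⁻ t in Icc 0 (2 * π), E (X₁ + r * exp (t * I)) := by
        rw [lintegral_const_mul' _ _ ENNReal.ofReal_ne_top]
        gcongr
        exact Ioo_subset_Ioi_self
    _ = ENNReal.ofReal (2 * π) * volume (g '' D) := by
        rw [← lintegral_eq_lintegral_polar X₁ hE, lintegral_indicator measurableSet_ball,
          lintegral_enorm_deriv_sq_eq_volume_image Metric.isOpen_ball hg hinj]
    _ < ⊤ := ENNReal.mul_lt_top ENNReal.ofReal_lt_top harea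

/-- For a conformal map `g` of the unit disk with image of finite area, and `X₁` on the
unit circle, the length `l r` of the image of the circular arc `C(r) = D ∩ {|z - X₁| = r}`
satisfies `∫₀^{1/2} l(r)²/r dr < ∞`. -/
theorem stmt_5 (g : ℂ → ℂ)
    (hg : DifferentiableOn ℂ g (Metric.ball (0 : ℂ) 1))
    (hinj : Set.InjOn g (Metric.ball (0 : ℂ) 1))
    (harea : volume (g '' Metric.ball (0 : ℂ) 1) < ⊤)
    (X₁ : ℂ) (hX₁ : ‖X₁‖ = 1)
    (l : ℝ → ℝ)
    (hl : ∀ r, l r = ∫ t in {t : ℝ | t ∈ Set.Icc 0 (2 * π) ∧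
        X₁ + r * Complex.exp (t * Complex.I) ∈ Metric.ball (0 : ℂ) 1},
        ‖deriv g (X₁ + r * Complex.exp (t * Complex.I))‖ * r) :
    MeasureTheory.IntegrableOn (fun r => (l r) ^ 2 / r) (Set.Ioo 0 (1 / 2)) volume :=
  stmt_5_general g hg hinj harea X₁ l hl
end

section
/- Let G be a finite connected graph with distinguished vertices t, b, and let R^eff denote the effective resistance between t and b (with unit conductances). Then R^eff equals the discrete extremal length: R^eff = max_W min_P (Σ_{e ∈ P} W_e)² / (Σ_{e ∈ E} W_e²), where the max is over all assignments W : E → [0,∞) not identically zero, and the min over all paths P from t to b. -/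
/-!
Write `L` for the graph Laplacian and `I = (L h) t` for the current leaving `t`. Since `L h`
vanishes off `{t, b}` and has total sum zero, Green's identity over the darts of `G` reads
`∑ (h u - h v) (g u - g v) = 2 (g t - g b) I` for every `g`. With `g = h` it identifies the energy
`∑_e |dh_e|²` with `I`, so `R^eff = 1 / I`.

For a weight `W ≥ 0`, the minimum over paths of `(∑_P W)²` is `d²`, where `d = d_W(t, b)` is the
`W`-weighted path distance. Green's identity with `g = d_W(t, ·)`, which is `W`-Lipschitz along
edges, and Cauchy–Schwarz give `d² I ≤ ∑_e W_e²`: no competitor exceeds `1 / I`. The weight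
`W = |dh|` attains `1 / I`: every path has `∑_P |dh| ≥ h t - h b = 1`, and by harmonicity one can
walk from `t` to `b` along strictly decreasing values of `h`, with equality.
-/

open Finset Matrix SimpleGraph

def absGrad {V : Type*} (h : V → ℝ) : Sym2 V → ℝ :=
  Sym2.lift ⟨fun x y => |h x - h y|, fun _ _ => abs_sub_comm _ _⟩

@[simp]
theorem absGrad_mk {V : Type*} (h : V → ℝ) (x y : V) : absGrad h s(x, y) = |h x - h y| := rfl

theorem absGrad_nonneg {V : Type*} (h : V → ℝ) (e : Sym2 V) : 0 ≤ absGrad h e :=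
  e.ind fun _ _ => abs_nonneg _

namespace SimpleGraph

section Darts

variable {V : Type*} [Fintype V] (G : SimpleGraph V) [DecidableRel G.Adj]

theorem sum_darts_swap {M : Type*} [AddCommMonoid M] (F : V → V → M) :
    ∑ d : G.Dart, F d.snd d.fst = ∑ d : G.Dart, F d.fst d.snd :=
  Fintype.sum_equiv (Function.Involutive.toPerm _ Dart.symm_involutive) _ _ fun _ => rfl

variable [DecidableEq V]

theorem sum_darts_eq_sum_neighborFinset {M : Type*} [AddCommMonoid M] (F : V → V → M) :
    ∑ d : G.Dart, F d.fst d.snd = ∑ u, ∑ v ∈ G.neighborFinset u, F u v := by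
  rw [← sum_fiberwise_of_maps_to (g := fun d : G.Dart => d.fst) (t := univ)
    (fun _ _ => mem_univ _)]
  refine sum_congr rfl fun u _ => ?_
  rw [dart_fst_fiber, sum_image fun _ _ _ _ h => G.dartOfNeighborSet_injective u h,
    ← sum_coe_sort (G.neighborFinset u)]
  exact Fintype.sum_equiv (Equiv.subtypeEquivRight fun v => (G.mem_neighborFinset u v).symm) _ _
    fun _ => rfl

theorem sum_darts_edge {M : Type*} [AddCommMonoid M] (F : Sym2 V → M) :
    ∑ d : G.Dart, F d.edge = 2 • ∑ e ∈ G.edgeFinset, F e := by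
  rw [← sum_fiberwise_of_maps_to (g := Dart.edge) (t := G.edgeFinset)
    (fun d _ => mem_edgeFinset.mpr d.edge_mem), smul_sum]
  refine sum_congr rfl fun e he => ?_
  rw [sum_congr rfl fun d hd => congrArg F (mem_filter.mp hd).2, sum_const,
    G.dart_edge_fiber_card e (mem_edgeFinset.mp he)]

theorem lapMatrix_mulVec_apply' {R : Type*} [NonAssocRing R] (f : V → R) (u : V) :
    (G.lapMatrix R *ᵥ f) u = ∑ v ∈ G.neighborFinset u, (f u - f v) := by
  rw [lapMatrix_mulVec_apply, sum_sub_distrib, sum_const, card_neighborFinset_eq_degree,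
    nsmul_eq_mul]

theorem sum_darts_sub_mul_sub {R : Type*} [CommRing R] (f g : V → R) :
    ∑ d : G.Dart, (f d.fst - f d.snd) * (g d.fst - g d.snd) =
      2 * (g ⬝ᵥ (G.lapMatrix R *ᵥ f)) := by
  have hswap := G.sum_darts_swap fun u v => (f u - f v) * g u
  have hsum := G.sum_darts_eq_sum_neighborFinset fun u v => g u * (f u - f v)
  calc ∑ d : G.Dart, (f d.fst - f d.snd) * (g d.fst - g d.snd)
      = ∑ d : G.Dart, (f d.fst - f d.snd) * g d.fst
        + ∑ d : G.Dart, (f d.snd - f d.fst) * g d.snd := by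
        rw [← sum_add_distrib]; exact sum_congr rfl fun _ _ => by ring
    _ = 2 * ∑ d : G.Dart, g d.fst * (f d.fst - f d.snd) := by
        rw [hswap, ← two_mul]; simp only [mul_comm]
    _ = 2 * (g ⬝ᵥ (G.lapMatrix R *ᵥ f)) := by
        simp only [hsum, dotProduct, lapMatrix_mulVec_apply', mul_sum]

theorem sum_lapMatrix_mulVec {R : Type*} [CommRing R] (f : V → R) :
    ∑ u, (G.lapMatrix R *ᵥ f) u = 0 := by
  calc ∑ u, (G.lapMatrix R *ᵥ f) u = ∑ d : G.Dart, (f d.fst - f d.snd) := by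
        simp only [lapMatrix_mulVec_apply', G.sum_darts_eq_sum_neighborFinset fun u v => f u - f v]
    _ = 0 := by rw [sum_sub_distrib, G.sum_darts_swap fun u _ => f u, sub_self]

theorem dotProduct_lapMatrix_mulVec_of_eq_zero {R : Type*} [CommRing R] {t b : V} (htb : t ≠ b)
    {h : V → R} (hlap : ∀ u, u ≠ t → u ≠ b → (G.lapMatrix R *ᵥ h) u = 0) (g : V → R) :
    g ⬝ᵥ (G.lapMatrix R *ᵥ h) = (g t - g b) * (G.lapMatrix R *ᵥ h) t := by
  have hflux := G.sum_lapMatrix_mulVec h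
  rw [Fintype.sum_eq_add t b htb fun u hu => hlap u hu.1 hu.2] at hflux
  rw [dotProduct, Fintype.sum_eq_add t b htb fun u hu => by rw [hlap u hu.1 hu.2, mul_zero]]
  linear_combination g b * hflux

end Darts

section Walks

variable {V : Type*} {G : SimpleGraph V}

theorem Walk.abs_sub_le_sum_absGrad (h : V → ℝ) {u v : V} (p : G.Walk u v) :
    |h u - h v| ≤ (p.edges.map (absGrad h)).sum := by
  induction p with
  | nil => simp
  | @cons x y z _ p ih =>
    rw [edges_cons, List.map_cons, List.sum_cons, absGrad_mk]
    exact (abs_sub_le _ (h y) _).trans (by gcongr)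

theorem Walk.exists_absGrad_ne_zero {h : V → ℝ} {u v : V} (p : G.Walk u v) (hne : h u ≠ h v) :
    ∃ e ∈ G.edgeSet, absGrad h e ≠ 0 := by
  by_contra! hzero
  have hsum : (p.edges.map (absGrad h)).sum = 0 :=
    List.sum_eq_zero fun _ he => by
      obtain ⟨e, hep, rfl⟩ := List.mem_map.mp he
      exact hzero e (p.edges_subset_edgeSet hep)
  have := p.abs_sub_le_sum_absGrad h
  rw [hsum, abs_nonpos_iff, sub_eq_zero] at this
  exact hne this

variable {W : Sym2 V → ℝ}

theorem Walk.sum_edges_nonneg (hW : ∀ e, 0 ≤ W e) {u v : V} (p : G.Walk u v) :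
    0 ≤ (p.edges.map W).sum :=
  List.sum_nonneg fun _ he => by
    obtain ⟨e, -, rfl⟩ := List.mem_map.mp he
    exact hW e

theorem Walk.sum_edges_bypass_le [DecidableEq V] (hW : ∀ e, 0 ≤ W e) {u v : V}
    (p : G.Walk u v) : (p.bypass.edges.map W).sum ≤ (p.edges.map W).sum :=
  (p.edges_bypass_sublist_edges.map W).sum_le_sum fun _ he => by
    obtain ⟨e, -, rfl⟩ := List.mem_map.mp he
    exact hW e

variable (G) in
noncomputable def weightedDist (W : Sym2 V → ℝ) (u v : V) : ℝ :=
  ⨅ p : G.Walk u v, (p.edges.map W).sum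

theorem weightedDist_le (hW : ∀ e, 0 ≤ W e) {u v : V} (p : G.Walk u v) :
    G.weightedDist W u v ≤ (p.edges.map W).sum :=
  ciInf_le ⟨0, by rintro _ ⟨q, rfl⟩; exact q.sum_edges_nonneg hW⟩ p

theorem le_weightedDist {u v : V} (hr : G.Reachable u v) {c : ℝ}
    (hc : ∀ p : G.Walk u v, c ≤ (p.edges.map W).sum) : c ≤ G.weightedDist W u v := by
  have : Nonempty (G.Walk u v) := hr
  exact le_ciInf hc

theorem weightedDist_self (hW : ∀ e, 0 ≤ W e) (u : V) : G.weightedDist W u u = 0 :=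
  le_antisymm (weightedDist_le hW .nil) (le_weightedDist .rfl fun p => p.sum_edges_nonneg hW)

theorem weightedDist_le_add (hW : ∀ e, 0 ≤ W e) {u v w : V} (hr : G.Reachable u v)
    (hadj : G.Adj v w) : G.weightedDist W u w ≤ G.weightedDist W u v + W s(v, w) := by
  rw [← sub_le_iff_le_add]
  refine le_weightedDist hr fun p => sub_le_iff_le_add.mpr ?_
  simpa [Walk.edges_concat] using weightedDist_le hW (p.concat hadj)

theorem abs_weightedDist_sub_le (hW : ∀ e, 0 ≤ W e) (hconn : G.Connected) (u : V) {v w : V}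
    (hadj : G.Adj v w) : |G.weightedDist W u v - G.weightedDist W u w| ≤ W s(v, w) := by
  have h₁ := weightedDist_le_add hW (hconn u v) hadj
  have h₂ := weightedDist_le_add hW (hconn u w) hadj.symm
  rw [Sym2.eq_swap] at h₂
  exact abs_sub_le_iff.mpr ⟨by linarith, by linarith⟩

theorem exists_isPath_sum_edges_eq_weightedDist [Fintype V] [DecidableEq V] [DecidableRel G.Adj]
    (hW : ∀ e, 0 ≤ W e) {u v : V} (hr : G.Reachable u v) :
    ∃ p : G.Walk u v, p.IsPath ∧ (p.edges.map W).sum = G.weightedDist W u v := by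
  have : Nonempty (G.Path u v) := ⟨hr.some.toPath⟩
  obtain ⟨q, -, hq⟩ := exists_min_image univ
    (fun q : G.Path u v => ((q : G.Walk u v).edges.map W).sum) univ_nonempty
  refine ⟨q, q.property, le_antisymm ?_ (weightedDist_le hW _)⟩
  exact le_weightedDist hr fun p =>
    (hq p.toPath (mem_univ _)).trans (p.sum_edges_bypass_le hW)

theorem sInf_sq_sum_edges_div [Fintype V] [DecidableEq V] [DecidableRel G.Adj]
    (hW : ∀ e, 0 ≤ W e) {u v : V} (hr : G.Reachable u v) {c : ℝ} (hc : 0 ≤ c) :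
    sInf {y : ℝ | ∃ p : G.Walk u v, p.IsPath ∧ y = (p.edges.map W).sum ^ 2 / c} =
      G.weightedDist W u v ^ 2 / c := by
  obtain ⟨q, hq, hqd⟩ := exists_isPath_sum_edges_eq_weightedDist hW hr
  refine IsLeast.csInf_eq ⟨⟨q, hq, by rw [hqd]⟩, ?_⟩
  rintro _ ⟨p, -, rfl⟩
  have hd : 0 ≤ G.weightedDist W u v := le_weightedDist hr fun p => p.sum_edges_nonneg hW
  gcongr
  exact weightedDist_le hW p

end Walks

section Harmonic

variable {V : Type*} [Fintype V] [DecidableEq V] {G : SimpleGraph V} [DecidableRel G.Adj]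
  {h : V → ℝ}

theorem lapMatrix_mulVec_eq_zero_of_eq_average {u : V}
    (hu : h u = (1 / (G.degree u : ℝ)) * ∑ v ∈ G.neighborFinset u, h v) :
    (G.lapMatrix ℝ *ᵥ h) u = 0 := by
  rw [lapMatrix_mulVec_apply, hu]
  rcases eq_or_ne (G.degree u) 0 with h0 | h0
  · -- isolated `u`: `1 / 0 = 0` and both sums are empty
    rw [← card_neighborFinset_eq_degree, card_eq_zero] at h0
    simp [h0]
  · field_simp
    ring

theorem exists_adj_lt_of_lt {u v : V} (hu : (G.lapMatrix ℝ *ᵥ h) u = 0) (hadj : G.Adj u v)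
    (hlt : h u < h v) : ∃ w, G.Adj u w ∧ h w < h u := by
  by_contra! hge
  have hneg : ∑ w ∈ G.neighborFinset u, (h u - h w) < ∑ w ∈ G.neighborFinset u, 0 :=
    sum_lt_sum (fun w hw => sub_nonpos.mpr (hge w ((G.mem_neighborFinset u w).mp hw)))
      ⟨v, (G.mem_neighborFinset u v).mpr hadj, sub_neg.mpr hlt⟩
  rw [sum_const_zero, ← lapMatrix_mulVec_apply', hu] at hneg
  exact hneg.false

theorem exists_walk_sum_absGrad_eq {B : Set V} (hlap : ∀ u ∉ B, (G.lapMatrix ℝ *ᵥ h) u = 0)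
    {u v : V} (hadj : G.Adj u v) (hlt : h v < h u) :
    ∃ x ∈ B, h x < h u ∧ ∃ p : G.Walk u x, (p.edges.map (absGrad h)).sum = h u - h x := by
  have hwf : WellFounded fun x y : V => h x < h y :=
    @Finite.wellFounded_of_trans_of_irrefl _ _ _ ⟨fun _ _ _ => lt_trans⟩ ⟨fun _ => lt_irrefl _⟩
  induction u using hwf.induction generalizing v with
  | _ u ih =>
    by_cases hv : v ∈ B
    · exact ⟨v, hv, hlt, .cons hadj .nil, by simp [abs_of_pos (sub_pos.mpr hlt)]⟩
    obtain ⟨w, hvw, hwv⟩ := exists_adj_lt_of_lt (hlap v hv) hadj.symm hlt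
    obtain ⟨x, hx, hxv, q, hq⟩ := ih v hlt hvw hwv
    refine ⟨x, hx, hxv.trans hlt, .cons hadj q, ?_⟩
    rw [Walk.edges_cons, List.map_cons, List.sum_cons, hq, absGrad_mk,
      abs_of_pos (sub_pos.mpr hlt)]
    ring

variable {t b : V}

theorem weightedDist_absGrad_eq (hr : G.Reachable t b)
    (hlap : ∀ u, u ≠ t → u ≠ b → (G.lapMatrix ℝ *ᵥ h) u = 0)
    (hpos : 0 < (G.lapMatrix ℝ *ᵥ h) t) : G.weightedDist (absGrad h) t b = h t - h b := by
  obtain ⟨v, hv, hvt⟩ : ∃ v ∈ G.neighborFinset t, 0 < h t - h v := by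
    rw [lapMatrix_mulVec_apply'] at hpos
    exact exists_lt_of_sum_lt (by rwa [sum_const_zero])
  obtain ⟨x, hx, hxt, p, hp⟩ := exists_walk_sum_absGrad_eq (B := {t, b})
    (fun u hu => hlap u (fun h => hu (.inl h)) (fun h => hu (.inr h)))
    ((G.mem_neighborFinset t v).mp hv) (sub_pos.mp hvt)
  obtain rfl : x = b := hx.resolve_left (by rintro rfl; exact hxt.false)
  exact le_antisymm (hp ▸ weightedDist_le (absGrad_nonneg h) p)
    (le_weightedDist hr fun q => (le_abs_self _).trans (q.abs_sub_le_sum_absGrad h))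

theorem sum_absGrad_sq_eq (htb : t ≠ b)
    (hlap : ∀ u, u ≠ t → u ≠ b → (G.lapMatrix ℝ *ᵥ h) u = 0) :
    ∑ e ∈ G.edgeFinset, absGrad h e ^ 2 = (h t - h b) * (G.lapMatrix ℝ *ᵥ h) t := by
  have hdarts : ∑ d : G.Dart, absGrad h d.edge ^ 2 =
      ∑ d : G.Dart, (h d.fst - h d.snd) * (h d.fst - h d.snd) :=
    sum_congr rfl fun _ _ => (sq_abs _).trans (sq _)
  have hedges := G.sum_darts_edge fun e => absGrad h e ^ 2
  rw [hdarts, sum_darts_sub_mul_sub, G.dotProduct_lapMatrix_mulVec_of_eq_zero htb hlap,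
    two_nsmul] at hedges
  linarith

theorem weightedDist_mul_lapMatrix_mulVec_sq_le (hconn : G.Connected) (htb : t ≠ b)
    (hlap : ∀ u, u ≠ t → u ≠ b → (G.lapMatrix ℝ *ᵥ h) u = 0) {W : Sym2 V → ℝ}
    (hW : ∀ e, 0 ≤ W e) :
    (G.weightedDist W t b * (G.lapMatrix ℝ *ᵥ h) t) ^ 2 ≤
      (h t - h b) * (G.lapMatrix ℝ *ᵥ h) t * ∑ e ∈ G.edgeFinset, W e ^ 2 := by
  set l := G.weightedDist W t
  have hcross : ∑ d : G.Dart, (h d.fst - h d.snd) * (l d.fst - l d.snd) =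
      -2 * (l b * (G.lapMatrix ℝ *ᵥ h) t) := by
    rw [sum_darts_sub_mul_sub, G.dotProduct_lapMatrix_mulVec_of_eq_zero htb hlap,
      show l t = 0 from weightedDist_self hW t]
    ring
  have hh : ∑ d : G.Dart, (h d.fst - h d.snd) ^ 2 =
      2 * ((h t - h b) * (G.lapMatrix ℝ *ᵥ h) t) := by
    simp only [sq]
    rw [sum_darts_sub_mul_sub, G.dotProduct_lapMatrix_mulVec_of_eq_zero htb hlap]
  have hl : ∑ d : G.Dart, (l d.fst - l d.snd) ^ 2 ≤ 2 * ∑ e ∈ G.edgeFinset, W e ^ 2 := by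
    refine (sum_le_sum fun (d : G.Dart) _ => ?_).trans_eq
      (by rw [G.sum_darts_edge fun e => W e ^ 2, two_nsmul, two_mul])
    have hlip := abs_le.mp (abs_weightedDist_sub_le hW hconn t d.adj)
    exact sq_le_sq' hlip.1 hlip.2
  have hcs := sum_mul_sq_le_sq_mul_sq univ (fun d : G.Dart => h d.fst - h d.snd)
    (fun d => l d.fst - l d.snd)
  rw [hcross, hh] at hcs
  have hE : 0 ≤ 2 * ((h t - h b) * (G.lapMatrix ℝ *ᵥ h) t) :=
    hh ▸ sum_nonneg fun _ _ => sq_nonneg _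
  nlinarith [mul_le_mul_of_nonneg_left hl hE]

end Harmonic

end SimpleGraph

/-- Duffin's theorem: the effective resistance between `t` and `b` (unit conductances)
equals the discrete extremal length
`max_W min_P (Σ_{e∈P} W_e)² / (Σ_{e∈E} W_e²)`. -/
theorem stmt_14 {V : Type*} [Fintype V] [DecidableEq V]
    (G : SimpleGraph V) [DecidableRel G.Adj] (hconn : G.Connected)
    (t b : V) (htb : t ≠ b)
    (h : V → ℝ) (hht : h t = 1) (hhb : h b = 0)
    (hharm : ∀ u, u ≠ t → u ≠ b →
      h u = (1 / (G.degree u : ℝ)) * ∑ v ∈ G.neighborFinset u, h v)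
    (I : ℝ) (hI : I = ∑ y ∈ G.neighborFinset t, (h t - h y))
    (Reff : ℝ) (hReff : Reff = (h t - h b) / I) :
    Reff = sSup {x : ℝ | ∃ W : Sym2 V → ℝ,
      (∀ e, 0 ≤ W e) ∧ (∃ e ∈ G.edgeSet, W e ≠ 0) ∧
      x = sInf {y : ℝ | ∃ p : G.Walk t b, p.IsPath ∧
        y = ((p.edges.map W).sum) ^ 2 / ∑ e ∈ G.edgeFinset, (W e) ^ 2}} := by
  have hlap : ∀ u, u ≠ t → u ≠ b → (G.lapMatrix ℝ *ᵥ h) u = 0 := fun u hut hub =>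
    lapMatrix_mulVec_eq_zero_of_eq_average (hharm u hut hub)
  have hIL : I = (G.lapMatrix ℝ *ᵥ h) t := by rw [hI, lapMatrix_mulVec_apply']
  have henergy : ∑ e ∈ G.edgeFinset, absGrad h e ^ 2 = I := by
    rw [sum_absGrad_sq_eq htb hlap, hht, hhb, hIL, sub_zero, one_mul]
  obtain ⟨e₀, he₀, hne₀⟩ := (hconn t b).some.exists_absGrad_ne_zero (h := h) (by simp [hht, hhb])
  have hIpos : 0 < I := henergy ▸ sum_pos' (fun e _ => sq_nonneg _)
    ⟨e₀, mem_edgeFinset.mpr he₀, pow_pos ((absGrad_nonneg h e₀).lt_of_ne' hne₀) 2⟩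
  rw [hReff, hht, hhb, sub_zero]
  symm
  refine IsGreatest.csSup_eq ⟨?_, ?_⟩
  · refine ⟨absGrad h, absGrad_nonneg h, ⟨e₀, he₀, hne₀⟩, ?_⟩
    rw [sInf_sq_sum_edges_div (absGrad_nonneg h) (hconn t b) (sum_nonneg fun _ _ => sq_nonneg _),
      henergy, weightedDist_absGrad_eq (hconn t b) hlap (hIL ▸ hIpos), hht, hhb]
    norm_num
  · rintro _ ⟨W, hW, ⟨e, he, hWe⟩, rfl⟩
    have hD : 0 < ∑ e ∈ G.edgeFinset, W e ^ 2 := sum_pos' (fun e _ => sq_nonneg _)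
      ⟨e, mem_edgeFinset.mpr he, pow_pos ((hW e).lt_of_ne' hWe) 2⟩
    have hdual := weightedDist_mul_lapMatrix_mulVec_sq_le hconn htb hlap hW
    rw [← hIL, hht, hhb, sub_zero, one_mul] at hdual
    rw [sInf_sq_sum_edges_div hW (hconn t b) hD.le, div_le_div_iff₀ hD hIpos]
    nlinarith
end

section
/- Let h be a discrete harmonic function on the box D_n = {(x,y) ∈ ℤ² : |x| ≤ 2^n, |y| ≤ 2^n} (harmonic at all interior vertices). Then there is a universal constant C > 0, independent of n and h, such that the discrete partial derivatives of h at the origin satisfy |h(1,0) - h(0,0)| ≤ C‖h‖_∞ / 2^n and |h(0,1) - h(0,0)| ≤ C‖h‖_∞ / 2^n. -/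
/-!
Put `g(x, y) = h(1 - x, y) - h(x, y)`, so that `g(0, 0) = h(1, 0) - h(0, 0)` and `g` is
antisymmetric under the reflection `x ↦ 1 - x`. On the half box `1 - R ≤ x ≤ 0, |y| ≤ R`,
`R = 2ⁿ`, the function `g` is discrete harmonic, bounded by `2M`, and satisfies
`g(1, y) = -g(0, y)` across the right edge. The quadratic `y² + x(1 - x) + R(1 - 2x)` is discrete
harmonic, is at least `R²` on the rest of the boundary, and its values at `x = 0` and `x = 1` have
nonnegative sum. A maximum principle adapted to the antisymmetry therefore bounds `|g|` by `2M/R²`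
times this quadratic, whose value at the origin is `R`.
-/

open Finset

theorem Finset.forall_le_of_exists_lt_le {α β γ : Type*} [LinearOrder β] [LinearOrder γ]
    (S : Finset α) (F : α → γ) (φ : α → β) (c : γ)
    (h : ∀ p ∈ S, c < F p → (∀ q ∈ S, F q ≤ F p) → ∃ q ∈ S, φ q < φ p ∧ F p ≤ F q) :
    ∀ p ∈ S, F p ≤ c := by
  by_contra! hex
  obtain ⟨p, hpS, hcp⟩ := hex
  obtain ⟨p₀, hp₀S, hp₀max⟩ := S.exists_max_image F ⟨p, hpS⟩
  -- among the maximizers of `F`, take one with the least value of `φ`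
  obtain ⟨b, hbT, hbmin⟩ := (S.filter (F p₀ ≤ F ·)).exists_min_image φ ⟨p₀, by simp [hp₀S]⟩
  rw [mem_filter] at hbT
  have hbmax : ∀ q ∈ S, F q ≤ F b := fun q hq => (hp₀max q hq).trans hbT.2
  obtain ⟨q, hqS, hφ, hle⟩ :=
    h b hbT.1 ((hcp.trans_le (hp₀max p hpS)).trans_le hbT.2) hbmax
  exact (hbmin q (mem_filter.2 ⟨hqS, hbT.2.trans hle⟩)).not_gt hφ

def discreteLaplacian (f : ℤ × ℤ → ℝ) (p : ℤ × ℤ) : ℝ :=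
  f (p.1 + 1, p.2) + f (p.1 - 1, p.2) + f (p.1, p.2 + 1) + f (p.1, p.2 - 1) - 4 * f p

theorem discreteLaplacian_comp_swap (f : ℤ × ℤ → ℝ) (p : ℤ × ℤ) :
    discreteLaplacian (f ∘ Prod.swap) p = discreteLaplacian f p.swap := by
  simp only [discreteLaplacian, Function.comp_apply, Prod.swap_prod_mk, Prod.fst_swap,
    Prod.snd_swap]
  ring

theorem discreteLaplacian_neg (f : ℤ × ℤ → ℝ) (p : ℤ × ℤ) :
    discreteLaplacian (-f) p = -discreteLaplacian f p := by
  simp only [discreteLaplacian, Pi.neg_apply]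
  ring

noncomputable def halfBox (R : ℤ) : Finset (ℤ × ℤ) := Icc (1 - R) 0 ×ˢ Icc (-R) R

theorem mem_halfBox {R : ℤ} {p : ℤ × ℤ} :
    p ∈ halfBox R ↔ 1 - R ≤ p.1 ∧ p.1 ≤ 0 ∧ |p.2| ≤ R := by
  simp [halfBox, abs_le, and_assoc]

theorem nonpos_of_discreteLaplacian_nonneg_on_halfBox (R : ℤ) (F : ℤ × ℤ → ℝ)
    (hbdry : ∀ p ∈ halfBox R, (p.1 = 1 - R ∨ |p.2| = R) → F p ≤ 0)
    (hsub : ∀ p ∈ halfBox R, 1 - R < p.1 → |p.2| < R → 0 ≤ discreteLaplacian F p)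
    (hrefl : ∀ y, F (1, y) ≤ -F (0, y)) :
    ∀ p ∈ halfBox R, F p ≤ 0 := by
  refine (halfBox R).forall_le_of_exists_lt_le F Prod.fst 0 fun p hp hpos hmax => ?_
  obtain ⟨x, y⟩ := p
  obtain ⟨hx₁, hx₂, hy⟩ := mem_halfBox.1 hp
  have hx : 1 - R < x := lt_of_le_of_ne hx₁ fun hx => (hbdry _ hp (.inl hx.symm)).not_gt hpos
  have hy : |y| < R := lt_of_le_of_ne hy fun hy => (hbdry _ hp (.inr hy)).not_gt hpos
  have hmem : ∀ x' y', 1 - R ≤ x' → x' ≤ 0 → |y'| ≤ R → (x', y') ∈ halfBox R :=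
    fun x' y' h₁ h₂ h₃ => mem_halfBox.2 ⟨h₁, h₂, h₃⟩
  rw [abs_lt] at hy
  have hup := hmax (x, y + 1) (hmem _ _ hx₁ hx₂ (abs_le.2 ⟨by omega, by omega⟩))
  have hdown := hmax (x, y - 1) (hmem _ _ hx₁ hx₂ (abs_le.2 ⟨by omega, by omega⟩))
  -- at `x = 0` the reflection condition stands in for the right neighbour outside the box
  have hright : F (x + 1, y) ≤ F (x, y) := by
    rcases hx₂.lt_or_eq with hx₂ | rfl
    · exact hmax _ (hmem _ _ (by omega) (by omega) (abs_le.2 ⟨by omega, by omega⟩))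
    · simpa using (hrefl y).trans (neg_le_self hpos.le)
  refine ⟨(x - 1, y), hmem _ _ (by omega) (by omega) (abs_le.2 ⟨by omega, by omega⟩),
    by simp, ?_⟩
  have := hsub _ hp hx (abs_lt.2 hy)
  simp only [discreteLaplacian] at this
  linarith

def halfBoxBarrier (R : ℤ) (p : ℤ × ℤ) : ℝ := p.2 ^ 2 + p.1 * (1 - p.1) + R * (1 - 2 * p.1)

theorem discreteLaplacian_halfBoxBarrier (R : ℤ) (p : ℤ × ℤ) :
    discreteLaplacian (halfBoxBarrier R) p = 0 := by
  simp only [discreteLaplacian, halfBoxBarrier]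
  push_cast
  ring

theorem halfBoxBarrier_one_add_halfBoxBarrier_zero (R y : ℤ) :
    halfBoxBarrier R (1, y) + halfBoxBarrier R (0, y) = 2 * y ^ 2 := by
  simp only [halfBoxBarrier]
  push_cast
  ring

theorem sq_le_halfBoxBarrier {R : ℤ} {p : ℤ × ℤ} (hp : p ∈ halfBox R)
    (hbdry : p.1 = 1 - R ∨ |p.2| = R) : (R : ℝ) ^ 2 ≤ halfBoxBarrier R p := by
  obtain ⟨x, y⟩ := p
  obtain ⟨hx₁, hx₂, -⟩ := mem_halfBox.1 hp
  have hx₁ : (1 : ℝ) - R ≤ x := by exact_mod_cast hx₁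
  have hx₂ : (x : ℝ) ≤ 0 := by exact_mod_cast hx₂
  simp only [halfBoxBarrier]
  rcases hbdry with rfl | hy
  · push_cast
    nlinarith [sq_nonneg (y : ℝ)]
  · have hy : (y : ℝ) ^ 2 = (R : ℝ) ^ 2 := by rw [← sq_abs, ← Int.cast_abs, hy]
    nlinarith

theorem le_halfBoxBarrier_of_antisymm (R : ℤ) (g : ℤ × ℤ → ℝ) (K : ℝ)
    (hbd : ∀ p ∈ halfBox R, |g p| ≤ K)
    (hharm : ∀ p ∈ halfBox R, 1 - R < p.1 → |p.2| < R → discreteLaplacian g p = 0)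
    (hanti : ∀ y, g (1, y) = -g (0, y)) :
    ∀ p ∈ halfBox R, g p ≤ K / R ^ 2 * halfBoxBarrier R p := by
  intro p hp
  have hR : (0 : ℝ) < R := by
    obtain ⟨h₁, h₂, -⟩ := mem_halfBox.1 hp
    exact_mod_cast (by omega : (0 : ℤ) < R)
  have hK : 0 ≤ K := (abs_nonneg _).trans (hbd p hp)
  set c := K / R ^ 2
  have hc : 0 ≤ c := by positivity
  suffices key : ∀ q ∈ halfBox R, g q - c * halfBoxBarrier R q ≤ 0 by linarith [key p hp]
  apply nonpos_of_discreteLaplacian_nonneg_on_halfBox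
  · intro q hq hbdry
    have hKw : K ≤ c * halfBoxBarrier R q := by
      rw [div_mul_eq_mul_div, le_div_iff₀ (by positivity)]
      exact mul_le_mul_of_nonneg_left (sq_le_halfBoxBarrier hq hbdry) hK
    linarith [le_of_abs_le (hbd q hq)]
  · intro q hq hx hy
    have hlin : discreteLaplacian (fun q => g q - c * halfBoxBarrier R q) q
        = discreteLaplacian g q - c * discreteLaplacian (halfBoxBarrier R) q := by
      simp only [discreteLaplacian]
      ring
    rw [hlin, hharm q hq hx hy, discreteLaplacian_halfBoxBarrier, mul_zero, sub_zero]
  · intro y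
    have hw := halfBoxBarrier_one_add_halfBoxBarrier_zero R y
    have : 0 ≤ c * (halfBoxBarrier R (1, y) + halfBoxBarrier R (0, y)) := by
      rw [hw]
      positivity
    rw [hanti y]
    linarith

theorem abs_le_halfBoxBarrier_of_antisymm (R : ℤ) (g : ℤ × ℤ → ℝ) (K : ℝ)
    (hbd : ∀ p ∈ halfBox R, |g p| ≤ K)
    (hharm : ∀ p ∈ halfBox R, 1 - R < p.1 → |p.2| < R → discreteLaplacian g p = 0)
    (hanti : ∀ y, g (1, y) = -g (0, y)) (p : ℤ × ℤ) (hp : p ∈ halfBox R) :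
    |g p| ≤ K / R ^ 2 * halfBoxBarrier R p := by
  refine abs_le'.2 ⟨le_halfBoxBarrier_of_antisymm R g K hbd hharm hanti p hp,
    le_halfBoxBarrier_of_antisymm R (-g) K (by simpa using hbd) ?_
      (fun y => by simp [hanti y]) p hp⟩
  intro q hq hx hy
  rw [discreteLaplacian_neg, hharm q hq hx hy, neg_zero]

theorem abs_sub_le_of_discreteLaplacian_eq_zero (R : ℤ) (hR : 0 < R) (h : ℤ × ℤ → ℝ) (M : ℝ)
    (hbd : ∀ p : ℤ × ℤ, |p.1| ≤ R → |p.2| ≤ R → |h p| ≤ M)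
    (hharm : ∀ p : ℤ × ℤ, |p.1| < R → |p.2| < R → discreteLaplacian h p = 0) :
    |h (1, 0) - h (0, 0)| ≤ 2 * M / R := by
  set g : ℤ × ℤ → ℝ := fun p => h (1 - p.1, p.2) - h p with hg
  have hgbd : ∀ p ∈ halfBox R, |g p| ≤ 2 * M := by
    intro p hp
    obtain ⟨h₁, h₂, h₃⟩ := mem_halfBox.1 hp
    have := hbd (1 - p.1, p.2) (abs_le.2 ⟨by omega, by omega⟩) h₃
    have := hbd p (abs_le.2 ⟨by omega, by omega⟩) h₃
    exact (abs_sub _ _).trans (by linarith)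
  have hgharm : ∀ p ∈ halfBox R, 1 - R < p.1 → |p.2| < R → discreteLaplacian g p = 0 := by
    intro p hp hx hy
    obtain ⟨-, h₂, -⟩ := mem_halfBox.1 hp
    have e₁ := hharm (1 - p.1, p.2) (abs_lt.2 ⟨by omega, by omega⟩) hy
    have e₂ := hharm p (abs_lt.2 ⟨by omega, by omega⟩) hy
    simp only [discreteLaplacian, hg] at e₁ e₂ ⊢
    rw [show 1 - (p.1 + 1) = 1 - p.1 - 1 by ring, show 1 - (p.1 - 1) = 1 - p.1 + 1 by ring]
    linarith
  have hanti : ∀ y, g (1, y) = -g (0, y) := fun y => by simp [hg]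
  have h0 : (0, 0) ∈ halfBox R := mem_halfBox.2 ⟨by omega, le_rfl, by simpa using hR.le⟩
  have hw : halfBoxBarrier R (0, 0) = R := by simp [halfBoxBarrier]
  have hR' : (R : ℝ) ≠ 0 := by exact_mod_cast hR.ne'
  calc |h (1, 0) - h (0, 0)| = |g (0, 0)| := by simp [hg]
    _ ≤ 2 * M / R ^ 2 * halfBoxBarrier R (0, 0) :=
      abs_le_halfBoxBarrier_of_antisymm R g (2 * M) hgbd hgharm hanti (0, 0) h0
    _ = 2 * M / R := by rw [hw]; field_simp

/-- Discrete derivative estimate for harmonic functions: there is a universal constant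
`C > 0` such that every function `h` on the box `D_n = {|x| ≤ 2ⁿ, |y| ≤ 2ⁿ} ⊆ ℤ²` that is
discrete harmonic at all interior vertices and bounded by `M` satisfies
`|h(1,0) - h(0,0)| ≤ C·M/2ⁿ` and `|h(0,1) - h(0,0)| ≤ C·M/2ⁿ`. -/
theorem stmt_16 :
    ∃ C : ℝ, 0 < C ∧ ∀ (n : ℕ) (h : ℤ × ℤ → ℝ) (M : ℝ),
      (∀ p : ℤ × ℤ, |p.1| ≤ 2 ^ n → |p.2| ≤ 2 ^ n → |h p| ≤ M) →
      (∀ p : ℤ × ℤ, |p.1| < 2 ^ n → |p.2| < 2 ^ n →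
        4 * h p = h (p.1 + 1, p.2) + h (p.1 - 1, p.2) + h (p.1, p.2 + 1) + h (p.1, p.2 - 1)) →
      |h (1, 0) - h (0, 0)| ≤ C * M / 2 ^ n ∧ |h (0, 1) - h (0, 0)| ≤ C * M / 2 ^ n := by
  refine ⟨2, two_pos, fun n h M hbd hharm => ?_⟩
  have hR : (0 : ℤ) < 2 ^ n := by positivity
  have hlap : ∀ p : ℤ × ℤ, |p.1| < 2 ^ n → |p.2| < 2 ^ n → discreteLaplacian h p = 0 :=
    fun p h₁ h₂ => by simp only [discreteLaplacian]; linarith [hharm p h₁ h₂]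
  have hx := abs_sub_le_of_discreteLaplacian_eq_zero _ hR h M hbd hlap
  have hy := abs_sub_le_of_discreteLaplacian_eq_zero _ hR (h ∘ Prod.swap) M
    (fun p h₁ h₂ => hbd p.swap h₂ h₁)
    (fun p h₁ h₂ => by rw [discreteLaplacian_comp_swap]; exact hlap p.swap h₂ h₁)
  push_cast at hx hy
  exact ⟨hx, hy⟩
end
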